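/- arXiv:1302.4303 — 2 statements merged into one kernel-verified Lean document; each statement's English description precedes it below -/
import Mathlib

section
/- Let K be an algebraically closed field complete with respect to a non-trivial absolute value |·|. Let F be a nondegenerate homogeneous polynomial pair over K of degree d ≥ 2. Then the sequence of functions p ↦ d^{−n}·log‖F^{∘n}(p)‖ converges uniformly on K² ∖ {(0,0)} as n → ∞; the limit function g_F satisfies g_F(F(p)) = d·g_F(p) for all p ∈ K² ∖ {(0,0)}, g_F(c·p) = g_F(p) + log|c| for all c ∈ K ∖ {0} and p ∈ K² ∖ {(0,0)}, and sup_{p ∈ K²∖{(0,0)}} |g_F(p) − log‖p‖| < ∞. -/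
/-!
By the Nullstellensatz, nondegeneracy gives `Aᵢ F₀ + Bᵢ F₁ = Xᵢ ^ Nᵢ` for both coordinates `i`;
evaluating at a point rescaled so that its largest coordinate is `1` yields `c ‖p‖ ^ d ≤ ‖F p‖`,
while `‖F p‖ ≤ C ‖p‖ ^ d` is trivial. Hence `|log ‖F p‖ - d log ‖p‖| ≤ B`, so consecutive terms of
`d⁻ⁿ log ‖Fⁿ p‖` differ by at most `B d⁻⁽ⁿ⁺¹⁾`: the sequence telescopes into a uniformly
convergent series whose sum stays within `B / (d - 1)` of `log ‖p‖`. Both functional equations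
hold for each term of the sequence, up to a shift of index, and pass to the limit.
-/

open MvPolynomial Filter

/-- The evaluation self-map of `K²` induced by a pair of two-variable polynomials. -/
noncomputable def evalPair {K : Type*} [Field K] (F₀ F₁ : MvPolynomial (Fin 2) K) :
    (Fin 2 → K) → (Fin 2 → K) :=
  fun p => ![MvPolynomial.eval p F₀, MvPolynomial.eval p F₁]

/-- The sup norm on `K²`. -/
noncomputable def supNorm {K : Type*} [NormedField K] (p : Fin 2 → K) : ℝ :=
  max ‖p 0‖ ‖p 1‖

open Set Topology

lemma supNorm_eq_norm {K : Type*} [NormedField K] (p : Fin 2 → K) : supNorm p = ‖p‖ := by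
  refine le_antisymm (max_le (norm_le_pi_norm p 0) (norm_le_pi_norm p 1))
    ((pi_norm_le_iff_of_nonneg (le_max_of_le_left (norm_nonneg _))).2 fun i => ?_)
  fin_cases i
  exacts [le_max_left _ _, le_max_right _ _]

namespace MvPolynomial

lemma IsHomogeneous.eval_smul {σ R : Type*} [Fintype σ] [CommSemiring R]
    {φ : MvPolynomial σ R} {m : ℕ} (hφ : φ.IsHomogeneous m) (c : R) (p : σ → R) :
    eval (c • p) φ = c ^ m * eval p φ := by
  rw [eval_eq', eval_eq', Finset.mul_sum]
  refine Finset.sum_congr rfl fun s hs => ?_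
  simp only [Pi.smul_apply, smul_eq_mul, mul_pow, Finset.prod_mul_distrib,
    Finset.prod_pow_eq_pow_sum, ← Finsupp.degree_eq_sum]
  rw [hφ.degree_eq_sum_deg_support hs, ← Finsupp.degree_apply]
  ring

lemma X_mem_radical_of_zeroLocus_subset {σ k : Type*} [Finite σ] [Field k] [IsAlgClosed k]
    {I : Ideal (MvPolynomial σ k)} (hI : zeroLocus k I ⊆ {0}) (i : σ) : X i ∈ I.radical := by
  rw [← vanishingIdeal_zeroLocus_eq_radical (K := k), mem_vanishingIdeal_iff]
  intro x hx
  rw [hI hx, aeval_X]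
  rfl

variable {σ K : Type*} [NormedField K]

noncomputable def coeffNormSum (φ : MvPolynomial σ K) : ℝ := ∑ s ∈ φ.support, ‖φ.coeff s‖

lemma coeffNormSum_nonneg (φ : MvPolynomial σ K) : 0 ≤ coeffNormSum φ :=
  Finset.sum_nonneg fun _ _ => norm_nonneg _

variable [Fintype σ]

lemma norm_eval_le_sum_mul_pow_degree (φ : MvPolynomial σ K) (p : σ → K) :
    ‖eval p φ‖ ≤ ∑ s ∈ φ.support, ‖φ.coeff s‖ * ‖p‖ ^ s.degree := by
  rw [eval_eq']
  refine (norm_sum_le _ _).trans (Finset.sum_le_sum fun s _ => ?_)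
  rw [norm_mul, norm_prod, Finsupp.degree_eq_sum, ← Finset.prod_pow_eq_pow_sum]
  gcongr with i
  rw [norm_pow]
  exact pow_le_pow_left₀ (norm_nonneg _) (norm_le_pi_norm p i) _

lemma IsHomogeneous.norm_eval_le {φ : MvPolynomial σ K} {m : ℕ} (hφ : φ.IsHomogeneous m)
    (p : σ → K) : ‖eval p φ‖ ≤ coeffNormSum φ * ‖p‖ ^ m := by
  refine (norm_eval_le_sum_mul_pow_degree φ p).trans_eq ?_
  rw [coeffNormSum, Finset.sum_mul]
  refine Finset.sum_congr rfl fun s hs => ?_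
  rw [Finsupp.degree_apply, ← hφ.degree_eq_sum_deg_support hs]

lemma norm_eval_le_coeffNormSum (φ : MvPolynomial σ K) {p : σ → K} (hp : ‖p‖ ≤ 1) :
    ‖eval p φ‖ ≤ coeffNormSum φ :=
  (norm_eval_le_sum_mul_pow_degree φ p).trans <| Finset.sum_le_sum fun _ _ =>
    mul_le_of_le_one_right (norm_nonneg _) (pow_le_one₀ (norm_nonneg _) hp)

end MvPolynomial

lemma Real.abs_log_sub_log_le {x y c C : ℝ} (hc : 0 < c) (hx : 0 < x) (hlow : c * x ≤ y)
    (hup : y ≤ C * x) : |Real.log y - Real.log x| ≤ max |Real.log c| |Real.log C| := by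
  have hy : 0 < y := (mul_pos hc hx).trans_le hlow
  have hC : 0 < C := (mul_pos_iff_of_pos_right hx).1 (hy.trans_le hup)
  have h_low : Real.log c ≤ Real.log y - Real.log x := by
    rw [← Real.log_div hy.ne' hx.ne']
    exact Real.log_le_log hc ((le_div_iff₀ hx).2 hlow)
  have h_up : Real.log y - Real.log x ≤ Real.log C := by
    rw [← Real.log_div hy.ne' hx.ne']
    exact Real.log_le_log (div_pos hy hx) ((div_le_iff₀ hx).2 hup)
  rw [abs_le]
  constructor <;> linarith [neg_abs_le (Real.log c), le_abs_self (Real.log C),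
    le_max_left |Real.log c| |Real.log C|, le_max_right |Real.log c| |Real.log C|]

section greenApprox

variable {X : Type*}

noncomputable def greenApprox (T : X → X) (L : X → ℝ) (d : ℝ) (n : ℕ) (x : X) : ℝ :=
  (d ^ n)⁻¹ * L (T^[n] x)

variable {T : X → X} {L : X → ℝ} {d : ℝ}

lemma greenApprox_eq_add_sum_range (N : ℕ) (x : X) :
    greenApprox T L d N x =
      L x + ∑ n ∈ Finset.range N, (greenApprox T L d (n + 1) x - greenApprox T L d n x) := by
  rw [Finset.sum_range_sub (fun n => greenApprox T L d n x)]
  simp [greenApprox]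

lemma greenApprox_apply_map (hd : d ≠ 0) (n : ℕ) (x : X) :
    greenApprox T L d n (T x) = d * greenApprox T L d (n + 1) x := by
  rw [greenApprox, greenApprox, ← Function.iterate_succ_apply, pow_succ]
  field_simp

lemma abs_greenApprox_succ_sub_le {S : Set X} (hd : 0 < d) (hS : MapsTo T S S) {B : ℝ}
    (hB : ∀ y ∈ S, |L (T y) - d * L y| ≤ B) (n : ℕ) {x : X} (hx : x ∈ S) :
    |greenApprox T L d (n + 1) x - greenApprox T L d n x| ≤ B * d⁻¹ ^ (n + 1) := by
  have h : greenApprox T L d (n + 1) x - greenApprox T L d n x =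
      (d ^ (n + 1))⁻¹ * (L (T (T^[n] x)) - d * L (T^[n] x)) := by
    rw [greenApprox, greenApprox, Function.iterate_succ_apply', pow_succ]
    field_simp
  rw [h, abs_mul, abs_of_pos (by positivity), inv_pow, mul_comm]
  exact mul_le_mul_of_nonneg_right (hB _ (hS.iterate n hx)) (by positivity)

theorem exists_tendstoUniformlyOn_greenApprox {S : Set X} (hd : 1 < d) (hS : MapsTo T S S)
    {B : ℝ} (hB : ∀ y ∈ S, |L (T y) - d * L y| ≤ B) :
    ∃ g : X → ℝ, TendstoUniformlyOn (greenApprox T L d) g atTop S ∧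
      ∀ x ∈ S, |g x - L x| ≤ B / (d - 1) := by
  have hd0 : 0 < d := zero_lt_one.trans hd
  have hsum : HasSum (fun n : ℕ => B * d⁻¹ ^ (n + 1)) (B / (d - 1)) := by
    have h := (hasSum_geometric_of_lt_one (inv_nonneg.mpr hd0.le)
      (inv_lt_one_of_one_lt₀ hd)).mul_left (B * d⁻¹)
    have hd1 : d - 1 ≠ 0 := (sub_pos.mpr hd).ne'
    rw [show B / (d - 1) = B * d⁻¹ * (1 - d⁻¹)⁻¹ by field_simp]
    simpa only [pow_succ', mul_assoc] using h
  have hv : ∀ n, ∀ x ∈ S,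
      ‖greenApprox T L d (n + 1) x - greenApprox T L d n x‖ ≤ B * d⁻¹ ^ (n + 1) :=
    fun n x hx => abs_greenApprox_succ_sub_le hd0 hS hB n hx
  refine ⟨fun x => L x + ∑' n, (greenApprox T L d (n + 1) x - greenApprox T L d n x), ?_,
    fun x hx => ?_⟩
  · have htsum := tendstoUniformlyOn_tsum_nat hsum.summable hv
    rw [Metric.tendstoUniformlyOn_iff] at htsum ⊢
    intro ε hε
    filter_upwards [htsum ε hε] with N hN x hx
    rw [greenApprox_eq_add_sum_range, dist_add_left]
    exact hN x hx
  · rw [add_sub_cancel_left, ← Real.norm_eq_abs]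
    exact tsum_of_norm_bounded hsum fun n => hv n x hx

end greenApprox

section evalPair

variable {K : Type*} [NormedField K] {d : ℕ} {F₀ F₁ : MvPolynomial (Fin 2) K}

lemma norm_evalPair (p : Fin 2 → K) : ‖evalPair F₀ F₁ p‖ = max ‖eval p F₀‖ ‖eval p F₁‖ :=
  (supNorm_eq_norm _).symm

lemma evalPair_ne_zero (hnd : ∀ p : Fin 2 → K, p ≠ 0 → ¬(eval p F₀ = 0 ∧ eval p F₁ = 0))
    {p : Fin 2 → K} (hp : p ≠ 0) : evalPair F₀ F₁ p ≠ 0 :=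
  fun h => hnd p hp ⟨congrFun h 0, congrFun h 1⟩

lemma evalPair_smul (hF₀ : F₀.IsHomogeneous d) (hF₁ : F₁.IsHomogeneous d) (c : K)
    (p : Fin 2 → K) : evalPair F₀ F₁ (c • p) = c ^ d • evalPair F₀ F₁ p := by
  ext i
  fin_cases i <;> simp [evalPair, hF₀.eval_smul, hF₁.eval_smul]

lemma iterate_evalPair_smul (hF₀ : F₀.IsHomogeneous d) (hF₁ : F₁.IsHomogeneous d) (c : K)
    (p : Fin 2 → K) (n : ℕ) :
    (evalPair F₀ F₁)^[n] (c • p) = c ^ d ^ n • (evalPair F₀ F₁)^[n] p := by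
  induction n generalizing c p with
  | zero => simp
  | succ n ih =>
    rw [Function.iterate_succ_apply, Function.iterate_succ_apply, evalPair_smul hF₀ hF₁, ih,
      ← pow_mul, ← pow_succ']

lemma norm_evalPair_le (hF₀ : F₀.IsHomogeneous d) (hF₁ : F₁.IsHomogeneous d)
    (p : Fin 2 → K) :
    ‖evalPair F₀ F₁ p‖ ≤ max (coeffNormSum F₀) (coeffNormSum F₁) * ‖p‖ ^ d := by
  rw [norm_evalPair, max_mul_of_nonneg _ _ (by positivity)]
  exact max_le_max (hF₀.norm_eval_le p) (hF₁.norm_eval_le p)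

lemma one_le_mul_norm_evalPair {A B : MvPolynomial (Fin 2) K} {i : Fin 2} {N : ℕ}
    (hAB : A * F₀ + B * F₁ = X i ^ N) {q : Fin 2 → K} (hq : ‖q‖ ≤ 1) (hqi : q i = 1) :
    1 ≤ (coeffNormSum A + coeffNormSum B) * ‖evalPair F₀ F₁ q‖ := by
  have h₀ : ‖eval q F₀‖ ≤ ‖evalPair F₀ F₁ q‖ := norm_le_pi_norm (evalPair F₀ F₁ q) 0
  have h₁ : ‖eval q F₁‖ ≤ ‖evalPair F₀ F₁ q‖ := norm_le_pi_norm (evalPair F₀ F₁ q) 1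
  calc (1 : ℝ) = ‖eval q A * eval q F₀ + eval q B * eval q F₁‖ := by
        rw [← eval_mul, ← eval_mul, ← eval_add, hAB]
        simp [hqi]
    _ ≤ ‖eval q A‖ * ‖eval q F₀‖ + ‖eval q B‖ * ‖eval q F₁‖ :=
        (norm_add_le _ _).trans_eq (by rw [norm_mul, norm_mul])
    _ ≤ coeffNormSum A * ‖evalPair F₀ F₁ q‖ + coeffNormSum B * ‖evalPair F₀ F₁ q‖ :=
        add_le_add
          (mul_le_mul (norm_eval_le_coeffNormSum A hq) h₀ (norm_nonneg _) (coeffNormSum_nonneg A))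
          (mul_le_mul (norm_eval_le_coeffNormSum B hq) h₁ (norm_nonneg _) (coeffNormSum_nonneg B))
    _ = (coeffNormSum A + coeffNormSum B) * ‖evalPair F₀ F₁ q‖ := by ring

lemma greenApprox_log_norm_evalPair_smul (hF₀ : F₀.IsHomogeneous d) (hF₁ : F₁.IsHomogeneous d)
    (hd : d ≠ 0) {c : K} (hc : c ≠ 0) {p : Fin 2 → K} {n : ℕ}
    (hp : (evalPair F₀ F₁)^[n] p ≠ 0) :
    greenApprox (evalPair F₀ F₁) (fun p => Real.log ‖p‖) d n (c • p) =
      greenApprox (evalPair F₀ F₁) (fun p => Real.log ‖p‖) d n p + Real.log ‖c‖ := by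
  simp only [greenApprox]
  rw [iterate_evalPair_smul hF₀ hF₁, norm_smul, norm_pow,
    Real.log_mul (by positivity) (norm_ne_zero_iff.mpr hp), Real.log_pow]
  push_cast
  field_simp
  ring

end evalPair

section lowerBound

variable {K : Type*} [NormedField K] [IsAlgClosed K] {d : ℕ} {F₀ F₁ : MvPolynomial (Fin 2) K}

lemma exists_mul_pow_le_norm_evalPair (hF₀ : F₀.IsHomogeneous d) (hF₁ : F₁.IsHomogeneous d)
    (hnd : ∀ p : Fin 2 → K, p ≠ 0 → ¬(eval p F₀ = 0 ∧ eval p F₁ = 0)) :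
    ∃ c : ℝ, 0 < c ∧ ∀ p : Fin 2 → K, p ≠ 0 → c * ‖p‖ ^ d ≤ ‖evalPair F₀ F₁ p‖ := by
  have hzero : zeroLocus K (Ideal.span {F₀, F₁}) ⊆ {0} := by
    intro x hx
    by_contra hx0
    exact hnd x hx0 ⟨by simpa using hx F₀ (Ideal.subset_span (by simp)),
      by simpa using hx F₁ (Ideal.subset_span (by simp))⟩
  choose N hN using fun i => Ideal.mem_radical_iff.mp (X_mem_radical_of_zeroLocus_subset hzero i)
  choose A B hAB using fun i => Ideal.mem_span_pair.mp (hN i)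
  set C := ∑ i, (coeffNormSum (A i) + coeffNormSum (B i))
  have hC : ∀ i, coeffNormSum (A i) + coeffNormSum (B i) ≤ C := fun i =>
    Finset.single_le_sum (fun j _ => add_nonneg (coeffNormSum_nonneg (A j))
      (coeffNormSum_nonneg (B j))) (Finset.mem_univ i)
  have hC0 : 0 ≤ C := (add_nonneg (coeffNormSum_nonneg _) (coeffNormSum_nonneg _)).trans (hC 0)
  refine ⟨(C + 1)⁻¹, by positivity, fun p hp => ?_⟩
  obtain ⟨i, hi⟩ : ∃ i, ‖p i‖ = ‖p‖ := by
    rw [← supNorm_eq_norm, supNorm]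
    rcases max_choice ‖p 0‖ ‖p 1‖ with h | h
    exacts [⟨0, h.symm⟩, ⟨1, h.symm⟩]
  have hpi : p i ≠ 0 := norm_pos_iff.mp (hi ▸ norm_pos_iff.mpr hp)
  set q := (p i)⁻¹ • p
  have hq : ‖q‖ = 1 := by rw [norm_smul, norm_inv, hi, inv_mul_cancel₀ (norm_ne_zero_iff.mpr hp)]
  have hqi : q i = 1 := by simp [q, hpi]
  have hFq : 1 ≤ (C + 1) * ‖evalPair F₀ F₁ q‖ :=
    (one_le_mul_norm_evalPair (hAB i) hq.le hqi).trans
      (mul_le_mul_of_nonneg_right ((hC i).trans (le_add_of_nonneg_right zero_le_one))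
        (norm_nonneg _))
  have hFp : ‖evalPair F₀ F₁ p‖ = ‖p‖ ^ d * ‖evalPair F₀ F₁ q‖ := by
    rw [← hi, ← norm_pow, ← norm_smul, ← evalPair_smul hF₀ hF₁, smul_inv_smul₀ hpi]
  rw [hFp, mul_comm]
  gcongr
  rwa [inv_le_iff_one_le_mul₀ (by positivity), mul_comm]

lemma exists_abs_log_norm_evalPair_sub_le (hF₀ : F₀.IsHomogeneous d)
    (hF₁ : F₁.IsHomogeneous d)
    (hnd : ∀ p : Fin 2 → K, p ≠ 0 → ¬(eval p F₀ = 0 ∧ eval p F₁ = 0)) :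
    ∃ B : ℝ, ∀ p : Fin 2 → K, p ≠ 0 →
      |Real.log ‖evalPair F₀ F₁ p‖ - d * Real.log ‖p‖| ≤ B := by
  obtain ⟨c, hc, hlow⟩ := exists_mul_pow_le_norm_evalPair hF₀ hF₁ hnd
  refine ⟨max |Real.log c| |Real.log (max (coeffNormSum F₀) (coeffNormSum F₁))|,
    fun p hp => ?_⟩
  rw [← Real.log_pow]
  exact Real.abs_log_sub_log_le hc (pow_pos (norm_pos_iff.mpr hp) d) (hlow p hp)
    (norm_evalPair_le hF₀ hF₁ p)

end lowerBound

theorem stmt_4_general (K : Type*) [NontriviallyNormedField K] [IsAlgClosed K]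
    (d : ℕ) (hd : 2 ≤ d)
    (F₀ F₁ : MvPolynomial (Fin 2) K)
    (hF₀ : F₀.IsHomogeneous d) (hF₁ : F₁.IsHomogeneous d)
    (hnd : ∀ p : Fin 2 → K, p ≠ 0 → ¬(eval p F₀ = 0 ∧ eval p F₁ = 0)) :
    ∃ g : (Fin 2 → K) → ℝ,
      TendstoUniformlyOn
        (fun (n : ℕ) (p : Fin 2 → K) =>
          ((d : ℝ) ^ n)⁻¹ * Real.log (supNorm ((evalPair F₀ F₁)^[n] p)))
        g atTop {p : Fin 2 → K | p ≠ 0} ∧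
      (∀ p : Fin 2 → K, p ≠ 0 → g (evalPair F₀ F₁ p) = d * g p) ∧
      (∀ c : K, c ≠ 0 → ∀ p : Fin 2 → K, p ≠ 0 → g (c • p) = g p + Real.log ‖c‖) ∧
      (∃ M : ℝ, ∀ p : Fin 2 → K, p ≠ 0 → |g p - Real.log (supNorm p)| ≤ M) := by
  have hd1 : (1 : ℝ) < d := by exact_mod_cast hd
  have hS : MapsTo (evalPair F₀ F₁) {p | p ≠ 0} {p | p ≠ 0} := fun _ hp => evalPair_ne_zero hnd hp
  obtain ⟨B, hB⟩ := exists_abs_log_norm_evalPair_sub_le hF₀ hF₁ hnd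
  obtain ⟨g, hg, hgL⟩ :=
    exists_tendstoUniformlyOn_greenApprox (L := fun p => Real.log ‖p‖) hd1 hS hB
  have hlim : ∀ p : Fin 2 → K, p ≠ 0 → Tendsto (fun n => greenApprox (evalPair F₀ F₁)
      (fun p => Real.log ‖p‖) d n p) atTop (𝓝 (g p)) := fun _ hp => hg.tendsto_at hp
  simp only [supNorm_eq_norm]
  refine ⟨g, hg, fun p hp => ?_, fun c hc p hp => ?_, ⟨_, hgL⟩⟩
  · refine tendsto_nhds_unique (hlim _ (hS hp)) ?_
    simp_rw [greenApprox_apply_map (zero_lt_one.trans hd1).ne']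
    exact ((hlim p hp).comp (tendsto_add_atTop_nat 1)).const_mul _
  · refine tendsto_nhds_unique (hlim _ (smul_ne_zero hc hp)) ?_
    have hsmul := fun n => greenApprox_log_norm_evalPair_smul hF₀ hF₁ (by omega) hc
      (hS.iterate n hp)
    simp_rw [hsmul]
    exact (hlim p hp).add_const _

/-- Let `K` be an algebraically closed field, complete with respect to a non-trivial
absolute value, and let `F` be a nondegenerate homogeneous polynomial pair of degree
`d ≥ 2` over `K`.  Then `d^{-n}·log‖F^{∘n}(p)‖` converges uniformly on `K² ∖ {0}` to a
function `g_F` satisfying `g_F(F(p)) = d·g_F(p)`, `g_F(c·p) = g_F(p) + log|c|`, and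
`sup_{p ≠ 0} |g_F(p) − log‖p‖| < ∞`. -/
theorem stmt_4 (K : Type*) [NontriviallyNormedField K] [CompleteSpace K] [IsAlgClosed K]
    (d : ℕ) (hd : 2 ≤ d)
    (F₀ F₁ : MvPolynomial (Fin 2) K)
    (hF₀ : F₀.IsHomogeneous d) (hF₁ : F₁.IsHomogeneous d)
    (hnd : ∀ p : Fin 2 → K, p ≠ 0 → ¬(eval p F₀ = 0 ∧ eval p F₁ = 0)) :
    ∃ g : (Fin 2 → K) → ℝ,
      TendstoUniformlyOn
        (fun (n : ℕ) (p : Fin 2 → K) =>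
          ((d : ℝ) ^ n)⁻¹ * Real.log (supNorm ((evalPair F₀ F₁)^[n] p)))
        g atTop {p : Fin 2 → K | p ≠ 0} ∧
      (∀ p : Fin 2 → K, p ≠ 0 → g (evalPair F₀ F₁ p) = d * g p) ∧
      (∀ c : K, c ≠ 0 → ∀ p : Fin 2 → K, p ≠ 0 → g (c • p) = g p + Real.log ‖c‖) ∧
      (∃ M : ℝ, ∀ p : Fin 2 → K, p ≠ 0 → |g p - Real.log (supNorm p)| ≤ M) :=
  stmt_4_general K d hd F₀ F₁ hF₀ hF₁ hnd
end

section
/- Let K be a commutative ring of prime characteristic p, and let f = X + X^p ∈ K[X]. Then for every integer j ≥ 0, the p^j-fold composition of f with itself equals X + X^{(p^{p^j})}; that is, f^{∘(p^j)}(X) = X + X^{p^{p^j}} as polynomials in K[X]. -/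
/-!
Iterating `q ↦ q.comp f` from `X` gives the same polynomial as iterating `q ↦ f.comp q`, and
`(X + X ^ p).comp q = q + q ^ p`. In characteristic `p` the map `q ↦ q + q ^ p` is `1 + Frob` in
the additive endomorphism ring, which again has characteristic `p`; hence its `p ^ j`-th power is
`1 + Frob ^ p ^ j`.
-/

open Polynomial

instance AddMonoid.End.charP {R : Type*} [Semiring R] (p : ℕ) [CharP R p] :
    CharP (AddMonoid.End R) p where
  cast_eq_zero_iff n := by
    rw [← CharP.cast_eq_zero_iff R p n]
    constructor
    · intro h
      simpa using DFunLike.congr_fun h 1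
    · intro h
      ext x
      simp [AddMonoid.End.natCast_apply, nsmul_eq_mul, h]

theorem iterate_add_pow_char_pow {R : Type*} [CommSemiring R] (p : ℕ) [Fact p.Prime] [CharP R p]
    (j : ℕ) (x : R) : (fun y : R => y + y ^ p)^[p ^ j] x = x + x ^ p ^ p ^ j := by
  let frob : AddMonoid.End R := (frobenius R p).toAddMonoidHom
  have h : (fun y : R => y + y ^ p) = ⇑(1 + frob) := rfl
  rw [h, ← AddMonoid.End.coe_pow, add_pow_char_pow_of_commute _ _ (Commute.one_left frob), one_pow]
  change x + (frob ^ p ^ j) x = _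
  rw [AddMonoid.End.coe_pow]
  exact congrArg (x + ·) (iterate_frobenius p _ x)

theorem Polynomial.iterate_comp_right {R : Type*} [CommSemiring R] (f q : R[X]) (m : ℕ) :
    (fun r : R[X] => r.comp f)^[m] q = q.comp ((fun r : R[X] => f.comp r)^[m] X) := by
  induction m generalizing q with
  | zero => simp
  | succ m ih => rw [Function.iterate_succ_apply, ih, comp_assoc, Function.iterate_succ_apply']

/-- Over a commutative ring `K` of prime characteristic `p`, the `p^j`-fold composition
of `f = X + X^p` with itself equals `X + X^(p^(p^j))`.  Here the `m`-fold composition of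
`g` is `g ∘ g ∘ ⋯ ∘ g` (`m` times), with the `0`-fold composition being `X`. -/
theorem stmt_7 (K : Type*) [CommRing K] (p : ℕ) (hp : p.Prime) [CharP K p] (j : ℕ) :
    (fun q : Polynomial K => q.comp (X + X ^ p))^[p ^ j] X
      = X + X ^ (p ^ (p ^ j)) := by
  have := Fact.mk hp
  have hcomp : (fun q : K[X] => (X + X ^ p).comp q) = fun q => q + q ^ p := by
    funext q
    simp
  rw [iterate_comp_right, X_comp, hcomp, iterate_add_pow_char_pow]
end
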